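/- Let γ be a (p,q)-clan, n = p+q, let w₀ ∈ S_n be the longest element (w₀(i) = n+1−i), and let W⁻ = { w ∈ S_n : r_{w₀w}(i,q) = γ(i;−) for all i = 1,…,n }. Then v(γ) ∈ W⁻, and v(γ) is the unique minimal element of W⁻ in the Bruhat order; that is, for every w ∈ W⁻ and all i,j ∈ {1,…,n} one has r_{v(γ)}(i,j) ≥ r_w(i,j). -/

import Mathlib

open Finset Module

noncomputable section

/-- Symbols of an FS-pattern: `+`, `-`, `F` (first occurrence / opener),
`S` (second occurrence / closer). -/
inductive FSSymbol : Type
  | plus : FSSymbol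
  | minus : FSSymbol
  | fst : FSSymbol
  | snd : FSSymbol
  deriving DecidableEq

/-- A `(p,q)`-clan on `{1,…,p+q}` (positions are `Fin (p+q)`, `0`-based).
`symbol i = Sum.inl j` means positions `i` and `j` carry the same natural
number (they form an arc), and `symbol i = Sum.inr true` (resp. `false`)
means position `i` carries a `+` (resp. a `-`).  The number of `+`'s minus
the number of `-`'s equals `p - q`. -/
structure Clan (p q : ℕ) where
  symbol : Fin (p + q) → (Fin (p + q)) ⊕ Bool
  mate_ne : ∀ i j, symbol i = Sum.inl j → j ≠ i
  mate_invol : ∀ i j, symbol i = Sum.inl j → symbol j = Sum.inl i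
  balance : (univ.filter fun i => symbol i = Sum.inr true).card + q
      = (univ.filter fun i => symbol i = Sum.inr false).card + p

namespace Clan

variable {p q : ℕ}

/-- `γ(i;+)`: the number of `+` signs and of arcs `(s,t)` with `t ≤ i`
among the first `i` positions (`i` is `1`-based). -/
def cplus (γ : Clan p q) (i : ℕ) : ℕ :=
  (univ.filter fun k : Fin (p + q) =>
    k.val < i ∧ (γ.symbol k = Sum.inr true ∨ ∃ j, γ.symbol k = Sum.inl j ∧ j < k)).card

/-- `γ(i;-)`: the number of `-` signs and of arcs `(s,t)` with `t ≤ i`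
among the first `i` positions (`i` is `1`-based). -/
def cminus (γ : Clan p q) (i : ℕ) : ℕ :=
  (univ.filter fun k : Fin (p + q) =>
    k.val < i ∧ (γ.symbol k = Sum.inr false ∨ ∃ j, γ.symbol k = Sum.inl j ∧ j < k)).card

/-- `γ(i;j)`: the number of arcs `(s,t)` with `s ≤ i < j < t`
(`i`, `j` are `1`-based). -/
def cpair (γ : Clan p q) (i j : ℕ) : ℕ :=
  (univ.filter fun s : Fin (p + q) =>
    s.val < i ∧ ∃ t, γ.symbol s = Sum.inl t ∧ s < t ∧ j ≤ t.val).card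

/-- The FS-pattern of a clan: signs stay, openers become `F`, closers `S`. -/
def FS (γ : Clan p q) (i : Fin (p + q)) : FSSymbol :=
  match γ.symbol i with
  | Sum.inr true => FSSymbol.plus
  | Sum.inr false => FSSymbol.minus
  | Sum.inl j => if j < i then FSSymbol.snd else FSSymbol.fst

/-- A clan avoids the pattern `(1,2,1,2)` iff no two of its arcs cross. -/
def Avoids1212 (γ : Clan p q) : Prop :=
  ¬ ∃ i1 i2 i3 i4 : Fin (p + q), i1 < i2 ∧ i2 < i3 ∧ i3 < i4 ∧
      γ.symbol i1 = Sum.inl i3 ∧ γ.symbol i2 = Sum.inl i4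

/-- `γ₊`: positions carrying a `+` or the second occurrence of a number. -/
def plusSet (γ : Clan p q) : Finset (Fin (p + q)) :=
  univ.filter fun i => γ.symbol i = Sum.inr true ∨ ∃ j, γ.symbol i = Sum.inl j ∧ j < i

/-- `γ̃₊`: positions carrying a `+` or the first occurrence of a number. -/
def tplusSet (γ : Clan p q) : Finset (Fin (p + q)) :=
  univ.filter fun i => γ.symbol i = Sum.inr true ∨ ∃ j, γ.symbol i = Sum.inl j ∧ i < j

end Clan

/-- The rank matrix `r_w(i,j) = #{k ≤ i : w(k) ≤ j}` (`i`, `j` are `1`-based). -/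
def rankMatrix {n : ℕ} (w : Equiv.Perm (Fin n)) (i j : ℕ) : ℕ :=
  (univ.filter fun k : Fin n => k.val < i ∧ (w k).val < j).card

/-- `u` is the permutation `u(γ)`: it assigns the values `p, p-1, …, 1` to the
positions of `γ₊` taken in increasing order, and `n, n-1, …, p+1` to the
positions of `γ₋` taken in increasing order (values are `0`-based, so the
`1`-based value of `u` at `i` is `(u i).val + 1`). -/
def IsUPerm {p q : ℕ} (γ : Clan p q) (u : Equiv.Perm (Fin (p + q))) : Prop :=
  ∀ i : Fin (p + q),
    (i ∈ γ.plusSet → (u i).val + 1 + (γ.plusSet.filter fun j => j < i).card = p) ∧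
    (i ∉ γ.plusSet →
      (u i).val + 1 + (univ.filter fun j => j ∉ γ.plusSet ∧ j < i).card = p + q)

/-- `v` is the permutation `v(γ)`: it assigns the values `1, …, p` to the
positions of `γ̃₊` taken in increasing order, and `p+1, …, n` to the
positions of `γ̃₋` taken in increasing order (values are `0`-based). -/
def IsVPerm {p q : ℕ} (γ : Clan p q) (v : Equiv.Perm (Fin (p + q))) : Prop :=
  ∀ i : Fin (p + q),
    (i ∈ γ.tplusSet → (v i).val = (γ.tplusSet.filter fun j => j < i).card) ∧
    (i ∉ γ.tplusSet →
      (v i).val = p + (univ.filter fun j => j ∉ γ.tplusSet ∧ j < i).card)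

/-- `E_j ⊆ ℂⁿ`: the span of the first `j` standard basis vectors, realized as
the subspace of vectors vanishing in coordinates `≥ j`. -/
def Efirst (n j : ℕ) : Submodule ℂ (Fin n → ℂ) :=
  ⨅ k ∈ {k : Fin n | j ≤ k.val}, LinearMap.ker (LinearMap.proj k : (Fin n → ℂ) →ₗ[ℂ] ℂ)

/-- `Ẽ_j ⊆ ℂⁿ`: the span of the last `j` standard basis vectors, realized as
the subspace of vectors vanishing in coordinates `< n - j`. -/
def Elast (n j : ℕ) : Submodule ℂ (Fin n → ℂ) :=
  ⨅ k ∈ {k : Fin n | k.val < n - j}, LinearMap.ker (LinearMap.proj k : (Fin n → ℂ) →ₗ[ℂ] ℂ)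

/-- The projection `π : ℂⁿ → E_p` with kernel `Ẽ_q` (for `n = p + q`). -/
def projE (n p : ℕ) : (Fin n → ℂ) →ₗ[ℂ] (Fin n → ℂ) where
  toFun v := fun k => if k.val < p then v k else 0
  map_add' u v := by funext k; by_cases h : k.val < p <;> simp [h]
  map_smul' c v := by funext k; by_cases h : k.val < p <;> simp [h]

/-- A complete flag `F_0 ⊂ F_1 ⊂ ⋯ ⊂ F_n` in `ℂⁿ`, `dim F_i = i`. -/
structure CompleteFlag (n : ℕ) where
  F : Fin (n + 1) → Submodule ℂ (Fin n → ℂ)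
  mono : Monotone F
  finrank_eq : ∀ i, finrank ℂ ↥(F i) = i.val

/-- Membership of a complete flag in the set `Q_γ`: the three linear-algebraic
conditions of Theorem `orbit_description`. -/
def MemQ {p q : ℕ} (γ : Clan p q) (Fl : CompleteFlag (p + q)) : Prop :=
  (∀ i : ℕ, 1 ≤ i → ∀ hi : i ≤ p + q,
      finrank ℂ ↥(Fl.F ⟨i, by omega⟩ ⊓ Efirst (p + q) p) = γ.cplus i ∧
      finrank ℂ ↥(Fl.F ⟨i, by omega⟩ ⊓ Elast (p + q) q) = γ.cminus i) ∧
  (∀ i j : ℕ, 1 ≤ i → ∀ hij : i < j, ∀ hj : j ≤ p + q,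
      finrank ℂ ↥((Fl.F ⟨i, by omega⟩).map (projE (p + q) p) ⊔ Fl.F ⟨j, by omega⟩)
        = j + γ.cpair i j)

/-- Membership in `K = GL(p,ℂ) × GL(q,ℂ)`, the block-diagonal subgroup of
`GL(p+q, ℂ)`: all entries mixing the first `p` and last `q` coordinates
vanish. -/
def InK (p q : ℕ) (g : (Matrix (Fin (p + q)) (Fin (p + q)) ℂ)ˣ) : Prop :=
  ∀ i j : Fin (p + q), ¬(i.val < p ↔ j.val < p) →
    (g : Matrix (Fin (p + q)) (Fin (p + q)) ℂ) i j = 0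

/-- `Fl' = g · Fl`: the flag `Fl'` is obtained by applying the invertible
matrix `g` to each subspace of the flag `Fl`. -/
def FlagMapsTo {n : ℕ} (g : (Matrix (Fin n) (Fin n) ℂ)ˣ) (Fl Fl' : CompleteFlag n) : Prop :=
  ∀ i, Fl'.F i = (Fl.F i).map (Matrix.mulVecLin (g : Matrix (Fin n) (Fin n) ℂ))

/-- A partial matching of `{1,…,n}`, given by its set of arcs `(s,t)`, `s < t`;
distinct arcs are disjoint. -/
def IsPartialMatching {n : ℕ} (M : Finset (Fin n × Fin n)) : Prop :=
  (∀ a ∈ M, a.1 < a.2) ∧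
  ∀ a ∈ M, ∀ b ∈ M, a ≠ b → a.1 ≠ b.1 ∧ a.1 ≠ b.2 ∧ a.2 ≠ b.1 ∧ a.2 ≠ b.2

/-- The number of crossing pairs of arcs of `M` (each crossing pair counted
once, ordered by its smaller opener). -/
def crossNum {n : ℕ} (M : Finset (Fin n × Fin n)) : ℕ :=
  ((M ×ˢ M).filter fun ab =>
    ab.1.1 < ab.2.1 ∧ ab.2.1 < ab.1.2 ∧ ab.1.2 < ab.2.2).card

/-- `M` is a noncrossing partial matching whose openers are exactly the
`F`-positions of the pattern `d` and whose closers are exactly the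
`S`-positions of `d`. -/
def MatchesPattern {n : ℕ} (d : Fin n → FSSymbol) (M : Finset (Fin n × Fin n)) : Prop :=
  IsPartialMatching M ∧
  (∀ i : Fin n, (∃ t, (i, t) ∈ M) ↔ d i = FSSymbol.fst) ∧
  (∀ i : Fin n, (∃ s, (s, i) ∈ M) ↔ d i = FSSymbol.snd) ∧
  ¬ ∃ a ∈ M, ∃ b ∈ M, a.1 < b.1 ∧ b.1 < a.2 ∧ a.2 < b.2

/-- The values `{w(1),…,w(i)}` arranged in increasing order. -/
def sortedPrefix {n : ℕ} (w : Equiv.Perm (Fin n)) (i : ℕ) : List (Fin n) :=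
  Finset.sort ((univ.filter fun k : Fin n => k.val < i).image w) (· ≤ ·)

/-!
Only the set `γ̃₊` matters. It has `p` elements, and its complement consists of the `-` signs and
the second occurrences, so `γ(i;-)` counts the positions `k ≤ i` outside `γ̃₊`, and `w ∈ W⁻` says
that exactly `γ(i;-)` of the values `w(1), …, w(i)` exceed `p`. For `v(γ)` these values are the two
initial segments `[1, i - γ(i;-)]` and `[p + 1, p + γ(i;-)]`; among all sets of `i` values with
`γ(i;-)` of them above `p`, this one has the most elements `≤ j`, for every `j`.
-/

namespace Finset

theorem card_filter_lt_add_card_filter_le (s : Finset ℕ) (p : ℕ) :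
    #(s.filter (· < p)) + #(s.filter (p ≤ ·)) = #s := by
  simpa only [not_lt] using s.card_filter_add_card_filter_not (· < p)

theorem card_filter_lt_le_min {s : Finset ℕ} {c : ℕ} (hs : ∀ m ∈ s, c ≤ m) (j : ℕ) :
    #(s.filter (· < j)) ≤ min #s (j - c) := by
  refine le_min (card_filter_le _ _) ?_
  calc #(s.filter (· < j)) ≤ #(Ico c j) :=
        card_le_card fun m hm => by
          rw [mem_filter] at hm
          exact mem_Ico.2 ⟨hs m hm.1, hm.2⟩
    _ = j - c := Nat.card_Ico c j

theorem card_filter_Ico_lt (c b j : ℕ) : #((Ico c (c + b)).filter (· < j)) = min b (j - c) := by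
  rw [Ico_filter_lt, Nat.card_Ico]
  omega

theorem card_filter_lt_le_of_filter_eq_Ico {s t : Finset ℕ} {p a b : ℕ}
    (hs_lt : s.filter (· < p) = Ico 0 a) (hs_le : s.filter (p ≤ ·) = Ico p (p + b))
    (hcard : #t = #s) (ht_le : #(t.filter (p ≤ ·)) = b) (j : ℕ) :
    #(t.filter (· < j)) ≤ #(s.filter (· < j)) := by
  have split : ∀ u : Finset ℕ,
      #(u.filter (· < j)) = #((u.filter (· < p)).filter (· < j))
        + #((u.filter (p ≤ ·)).filter (· < j)) := fun u => by
    rw [filter_comm, filter_comm (p := (p ≤ ·)), card_filter_lt_add_card_filter_le]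
  have ht_lt : #(t.filter (· < p)) = a := by
    have hs := card_filter_lt_add_card_filter_le s p
    have ht := card_filter_lt_add_card_filter_le t p
    rw [hs_lt, hs_le, Nat.card_Ico, Nat.card_Ico] at hs
    omega
  have hlow := card_filter_lt_le_min (s := t.filter (· < p)) (c := 0)
    (fun m _ => Nat.zero_le m) j
  have hhigh := card_filter_lt_le_min (s := t.filter (p ≤ ·)) (c := p)
    (fun m hm => (mem_filter.1 hm).2) j
  rw [split s, split t, hs_lt, hs_le, ← zero_add a, card_filter_Ico_lt, card_filter_Ico_lt]
  rw [ht_lt] at hlow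
  rw [ht_le] at hhigh
  omega

theorem card_filter_lt_lt_card_filter_val_lt {n : ℕ} {s : Finset (Fin n)} {k : Fin n}
    (hk : k ∈ s) {i : ℕ} (hki : k.val < i) :
    #(s.filter (· < k)) < #(s.filter fun l => l.val < i) := by
  refine card_lt_card ((ssubset_iff_of_subset fun l hl => ?_).2 ⟨k, ?_, ?_⟩)
  · rw [mem_filter] at hl ⊢
    exact ⟨hl.1, lt_trans (Fin.lt_def.1 hl.2) hki⟩
  · exact mem_filter.2 ⟨hk, hki⟩
  · simp

end Finset

section PrefixValues

variable {n : ℕ}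

def prefixValues (w : Equiv.Perm (Fin n)) (i : ℕ) : Finset ℕ :=
  (univ.filter fun k : Fin n => k.val < i).image fun k => (w k).val

theorem val_apply_injective (w : Equiv.Perm (Fin n)) : Function.Injective fun k => (w k).val :=
  Fin.val_injective.comp w.injective

theorem card_filter_prefixValues (w : Equiv.Perm (Fin n)) (i : ℕ) (P : ℕ → Prop)
    [DecidablePred P] :
    #((prefixValues w i).filter P) = #(univ.filter fun k : Fin n => k.val < i ∧ P (w k)) := by
  rw [prefixValues, filter_image, filter_filter,
    card_image_of_injective _ (val_apply_injective w)]

theorem card_prefixValues (w : Equiv.Perm (Fin n)) (i : ℕ) :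
    #(prefixValues w i) = #(univ.filter fun k : Fin n => k.val < i) :=
  card_image_of_injective _ (val_apply_injective w)

theorem rankMatrix_eq_card_filter_prefixValues (w : Equiv.Perm (Fin n)) (i j : ℕ) :
    rankMatrix w i j = #((prefixValues w i).filter (· < j)) :=
  (card_filter_prefixValues w i (· < j)).symm

theorem rankMatrix_revPerm_mul {p q : ℕ} (w : Equiv.Perm (Fin (p + q))) (i : ℕ) :
    rankMatrix (Fin.revPerm * w) i q = #((prefixValues w i).filter (p ≤ ·)) := by
  rw [card_filter_prefixValues, rankMatrix]
  refine congrArg card (filter_congr fun k _ => and_congr_right fun _ => ?_)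
  rw [Equiv.Perm.mul_apply, Fin.revPerm_apply, Fin.val_rev]
  have := (w k).isLt
  omega

theorem prefixValues_filter_eq_Ico {v : Equiv.Perm (Fin n)} {s : Finset (Fin n)}
    {P : ℕ → Prop} [DecidablePred P] {c : ℕ} (hP : ∀ k, P (v k) ↔ k ∈ s)
    (hs : ∀ k ∈ s, (v k).val = c + #(s.filter (· < k))) (i : ℕ) :
    (prefixValues v i).filter P = Ico c (c + #(s.filter fun k => k.val < i)) := by
  have hsub : (prefixValues v i).filter P ⊆ Ico c (c + #(s.filter fun k => k.val < i)) := by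
    intro m hm
    simp only [prefixValues, mem_filter, mem_image, mem_univ, true_and] at hm
    obtain ⟨⟨k, hki, rfl⟩, hPk⟩ := hm
    have hks := (hP k).1 hPk
    rw [mem_Ico, hs k hks]
    exact ⟨Nat.le_add_right _ _,
      Nat.add_lt_add_left (card_filter_lt_lt_card_filter_val_lt hks hki) c⟩
  refine eq_of_subset_of_card_le hsub ?_
  calc #(Ico c (c + #(s.filter fun k => k.val < i)))
      = #((s.filter fun k => k.val < i).image fun k => (v k).val) := by
        rw [Nat.card_Ico, add_tsub_cancel_left,
          card_image_of_injective _ (val_apply_injective v)]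
    _ ≤ #((prefixValues v i).filter P) := card_le_card fun m hm => by
        simp only [mem_image, mem_filter] at hm
        obtain ⟨k, ⟨hks, hki⟩, rfl⟩ := hm
        simp only [prefixValues, mem_filter, mem_image, mem_univ, true_and]
        exact ⟨⟨k, hki, rfl⟩, (hP k).2 hks⟩

end PrefixValues

namespace Clan

variable {p q : ℕ} (γ : Clan p q)

def mate (k : Fin (p + q)) : Fin (p + q) :=
  (γ.symbol k).elim id fun _ => k

theorem mate_eq {k j : Fin (p + q)} (h : γ.symbol k = Sum.inl j) : γ.mate k = j := by
  simp [mate, h]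

theorem card_openers_eq_card_closers :
    #(univ.filter fun k => ∃ j, γ.symbol k = Sum.inl j ∧ k < j)
      = #(univ.filter fun k => ∃ j, γ.symbol k = Sum.inl j ∧ j < k) := by
  refine card_nbij' γ.mate γ.mate ?_ ?_ ?_ ?_ <;>
    simp only [Set.MapsTo, Set.LeftInvOn, coe_filter, mem_univ, true_and, Set.mem_ofPred_eq] <;>
    rintro k ⟨j, hj, hlt⟩ <;>
    simp only [γ.mate_eq hj, γ.mate_eq (γ.mate_invol k j hj)]
  · exact ⟨k, γ.mate_invol k j hj, hlt⟩
  · exact ⟨k, γ.mate_invol k j hj, hlt⟩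

theorem notMem_tplusSet_iff {k : Fin (p + q)} :
    k ∉ γ.tplusSet ↔ γ.symbol k = Sum.inr false ∨ ∃ j, γ.symbol k = Sum.inl j ∧ j < k := by
  rcases h : γ.symbol k with j | b
  · simp [tplusSet, h, (γ.mate_ne k j h).le_iff_lt]
  · cases b <;> simp [tplusSet, h]

theorem card_tplusSet : #γ.tplusSet = p := by
  have hplus : #γ.tplusSet = #(univ.filter fun k => γ.symbol k = Sum.inr true)
      + #(univ.filter fun k => ∃ j, γ.symbol k = Sum.inl j ∧ k < j) := by
    rw [tplusSet, filter_or, card_union_of_disjoint (disjoint_filter.2 ?_)]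
    rintro k - h ⟨j, hj, -⟩
    simp [h] at hj
  have hminus : #γ.tplusSetᶜ = #(univ.filter fun k => γ.symbol k = Sum.inr false)
      + #(univ.filter fun k => ∃ j, γ.symbol k = Sum.inl j ∧ j < k) := by
    have : γ.tplusSetᶜ = univ.filter fun k => γ.symbol k = Sum.inr false ∨
        ∃ j, γ.symbol k = Sum.inl j ∧ j < k := by
      ext k
      rw [mem_compl, notMem_tplusSet_iff, mem_filter]
      simp
    rw [this, filter_or, card_union_of_disjoint (disjoint_filter.2 ?_)]
    rintro k - h ⟨j, hj, -⟩
    simp [h] at hj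
  have htotal := card_add_card_compl γ.tplusSet
  rw [Fintype.card_fin] at htotal
  have hbalance := γ.balance
  have harcs := γ.card_openers_eq_card_closers
  omega

theorem cminus_eq_card_filter_compl_tplusSet (i : ℕ) :
    γ.cminus i = #(γ.tplusSetᶜ.filter fun k => k.val < i) := by
  rw [cminus]
  congr 1
  ext k
  simp only [mem_filter, mem_univ, true_and, mem_compl, notMem_tplusSet_iff, and_comm]

end Clan

namespace IsVPerm

variable {p q : ℕ} {γ : Clan p q} {v : Equiv.Perm (Fin (p + q))}

theorem val_lt_iff (hv : IsVPerm γ v) (k : Fin (p + q)) : (v k).val < p ↔ k ∈ γ.tplusSet := by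
  by_cases hk : k ∈ γ.tplusSet
  · simp only [hk, iff_true, (hv k).1 hk]
    calc #(γ.tplusSet.filter (· < k)) < #γ.tplusSet :=
          card_lt_card (filter_ssubset.2 ⟨k, hk, lt_irrefl k⟩)
      _ = p := γ.card_tplusSet
  · simp [hk, (hv k).2 hk]

theorem prefixValues_filter_lt (hv : IsVPerm γ v) (i : ℕ) :
    (prefixValues v i).filter (· < p) = Ico 0 #(γ.tplusSet.filter fun k => k.val < i) := by
  have h := prefixValues_filter_eq_Ico (P := (· < p)) (c := 0) hv.val_lt_iff
    (fun k hk => by rw [zero_add, (hv k).1 hk]) i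
  rwa [zero_add] at h

theorem prefixValues_filter_ge (hv : IsVPerm γ v) (i : ℕ) :
    (prefixValues v i).filter (p ≤ ·) = Ico p (p + γ.cminus i) := by
  rw [γ.cminus_eq_card_filter_compl_tplusSet]
  refine prefixValues_filter_eq_Ico (fun k => by rw [mem_compl, ← hv.val_lt_iff, not_lt])
    (fun k hk => ?_) i
  rw [(hv k).2 (mem_compl.1 hk)]
  congr 2
  ext l
  simp [and_comm]

end IsVPerm

theorem vPerm_min_of_Wminus_general {p q : ℕ} (γ : Clan p q)
    (v : Equiv.Perm (Fin (p + q))) (hv : IsVPerm γ v) :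
    (∀ i : ℕ, 1 ≤ i → i ≤ p + q →
        rankMatrix (Fin.revPerm * v) i q = γ.cminus i) ∧
    (∀ w : Equiv.Perm (Fin (p + q)),
      (∀ i : ℕ, 1 ≤ i → i ≤ p + q →
        rankMatrix (Fin.revPerm * w) i q = γ.cminus i) →
      ∀ i j : ℕ, 1 ≤ i → i ≤ p + q → 1 ≤ j → j ≤ p + q →
        rankMatrix w i j ≤ rankMatrix v i j) := by
  refine ⟨fun i _ _ => ?_, fun w hw i j hi₁ hi₂ _ _ => ?_⟩
  · rw [rankMatrix_revPerm_mul, hv.prefixValues_filter_ge, Nat.card_Ico, add_tsub_cancel_left]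
  · rw [rankMatrix_eq_card_filter_prefixValues, rankMatrix_eq_card_filter_prefixValues]
    exact card_filter_lt_le_of_filter_eq_Ico (hv.prefixValues_filter_lt i)
      (hv.prefixValues_filter_ge i) (by rw [card_prefixValues, card_prefixValues])
      (by rw [← rankMatrix_revPerm_mul, hw i hi₁ hi₂]) j

/-- `v(γ)` lies in
`W⁻ = {w : r_{w₀w}(i,q) = γ(i;-) for all i}` and is its unique minimal element
in the Bruhat order: every `w ∈ W⁻` satisfies `r_{v(γ)}(i,j) ≥ r_w(i,j)`. -/
theorem vPerm_min_of_Wminus {p q : ℕ} (hn : 1 ≤ p + q) (γ : Clan p q)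
    (v : Equiv.Perm (Fin (p + q))) (hv : IsVPerm γ v) :
    (∀ i : ℕ, 1 ≤ i → i ≤ p + q →
        rankMatrix (Fin.revPerm * v) i q = γ.cminus i) ∧
    (∀ w : Equiv.Perm (Fin (p + q)),
      (∀ i : ℕ, 1 ≤ i → i ≤ p + q →
        rankMatrix (Fin.revPerm * w) i q = γ.cminus i) →
      ∀ i j : ℕ, 1 ≤ i → i ≤ p + q → 1 ≤ j → j ≤ p + q →
        rankMatrix w i j ≤ rankMatrix v i j) :=
  vPerm_min_of_Wminus_general γ v hv
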